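/- arXiv:2306.11883 — 9 statements merged into one kernel-verified Lean document; each statement's English description precedes it below -/
import Mathlib

section
/- Suppose a group G acts on a set U, and F is a finite subset of U. For each f in F, suppose the orbit G∘f is finite whenever it meets a given finite set X ⊆ U. If the family of sets G_f = {g ∈ G | g∘f ∈ X} (for f ∈ F) covers every element of G at least k times, then the sum over f ∈ F of |G∘f ∩ X| / |G∘f| (with the convention that the term is 0 when the orbit is infinite) is at least k. -/
/-!
Only the points of `F` whose orbit meets `X` matter, and their orbits are finite. Let `H` be
the intersection of their stabilizers; it has finite index. For each such `f`, the orbit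
map `G ⧸ H → G ∘ f` has fibres of equal size, so `|G ∘ f ∩ X| / |G ∘ f|` is the
proportion of cosets `c` with `c • f ∈ X`. Summing over `f` and exchanging the sums turns
the sum into the average over `c ∈ G ⧸ H` of `#{f | c • f ∈ X}`, which is at least `k` by
the covering hypothesis.
-/

open MulAction

namespace MulAction

variable {G U : Type*} [Group G] [MulAction G U]

theorem finiteIndex_stabilizer_of_finite_orbit {f : U} (h : (orbit G f).Finite) :
    (stabilizer G f).FiniteIndex :=
  ⟨by rw [index_stabilizer]; exact ((Set.ncard_pos h).mpr (nonempty_orbit f)).ne'⟩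

/-- The orbit map `G ⧸ H → orbit G f` is the first projection of
`G ⧸ H ≃ (G ⧸ stabilizer G f) × (stabilizer G f ⧸ H)`, so all its fibres have
`H.relIndex (stabilizer G f)` points. -/
theorem card_out_smul_mem_eq {H : Subgroup G} {f : U} (hH : H ≤ stabilizer G f) (X : Set U) :
    Nat.card {c : G ⧸ H // c.out • f ∈ X} =
      (orbit G f ∩ X).ncard * H.relIndex (stabilizer G f) := by
  let e : G ⧸ H ≃ orbit G f × (stabilizer G f ⧸ H.subgroupOf (stabilizer G f)) :=
    (Subgroup.quotientEquivProdOfLE hH).trans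
      ((orbitEquivQuotientStabilizer G f).symm.prodCongr (.refl _))
  have he (c : G ⧸ H) : ((e c).1 : U) = c.out • f := by
    conv_lhs => rw [← QuotientGroup.out_eq' c]
    exact orbitEquivQuotientStabilizer_symm_apply G f c.out
  calc Nat.card {c : G ⧸ H // c.out • f ∈ X}
      = Nat.card {p : orbit G f × (stabilizer G f ⧸ H.subgroupOf (stabilizer G f)) //
          (p.1 : U) ∈ X} := Nat.card_congr (e.subtypeEquiv fun c => by rw [he])
    _ = Nat.card {o : orbit G f // (o : U) ∈ X} * H.relIndex (stabilizer G f) :=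
      (Nat.card_congr (Equiv.prodSubtypeFstEquivSubtypeProd
        (p := fun o : orbit G f => (o : U) ∈ X))).trans (Nat.card_prod _ _)
    _ = (orbit G f ∩ X).ncard * H.relIndex (stabilizer G f) := by
      rw [Nat.card_congr (Equiv.subtypeSubtypeEquivSubtypeInter (· ∈ orbit G f) (· ∈ X))]
      rfl

theorem ncard_orbit_inter_div_ncard_orbit {K : Type*} [Field K] [CharZero K]
    {H : Subgroup G} [H.FiniteIndex] {f : U} (hH : H ≤ stabilizer G f) (X : Set U) :
    ((orbit G f ∩ X).ncard : K) / (orbit G f).ncard =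
      Nat.card {c : G ⧸ H // c.out • f ∈ X} / H.index := by
  have hrel : H.relIndex (stabilizer G f) ≠ 0 := fun h0 =>
    Subgroup.FiniteIndex.index_ne_zero (by rw [← Subgroup.relIndex_mul_index hH, h0, zero_mul])
  rw [card_out_smul_mem_eq hH, ← Subgroup.relIndex_mul_index hH, index_stabilizer,
    Nat.cast_mul, Nat.cast_mul, mul_comm ((H.relIndex (stabilizer G f) : ℕ) : K),
    mul_div_mul_right _ _ (Nat.cast_ne_zero.mpr hrel)]

theorem le_sum_ncard_orbit_inter_div_ncard_orbit {K : Type*} [Field K] [LinearOrder K]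
    [IsStrictOrderedRing K] [DecidableEq U] (F X : Finset U) (k : ℕ)
    (hfin : ∀ f ∈ F, (orbit G f).Finite)
    (hcov : ∀ g : G, k ≤ (F.filter (g • · ∈ X)).card) :
    (k : K) ≤ ∑ f ∈ F, ((orbit G f ∩ (X : Set U)).ncard : K) / (orbit G f).ncard := by
  set H : Subgroup G := ⨅ f ∈ F, stabilizer G f
  have : H.FiniteIndex := Subgroup.finiteIndex_iInf' _ fun f hf =>
    finiteIndex_stabilizer_of_finite_orbit (hfin f hf)
  have : Fintype (G ⧸ H) := Fintype.ofFinite _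
  have hdouble : k * H.index ≤ ∑ f ∈ F, Nat.card {c : G ⧸ H // c.out • f ∈ X} :=
    calc k * H.index = ∑ _c : G ⧸ H, k := by
          rw [Finset.sum_const, Finset.card_univ, smul_eq_mul, mul_comm, Subgroup.index,
            Nat.card_eq_fintype_card]
      _ ≤ ∑ c : G ⧸ H, (F.filter (c.out • · ∈ X)).card :=
          Finset.sum_le_sum fun c _ => hcov c.out
      _ = ∑ f ∈ F, (Finset.univ.filter fun c : G ⧸ H => c.out • f ∈ X).card :=
          Finset.sum_card_bipartiteAbove_eq_sum_card_bipartiteBelow _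
      _ = ∑ f ∈ F, Nat.card {c : G ⧸ H // c.out • f ∈ X} := by
          simp only [Nat.card_eq_fintype_card, Fintype.card_subtype]
  calc (k : K) ≤ ∑ f ∈ F, (Nat.card {c : G ⧸ H // c.out • f ∈ X} : K) / H.index := by
        rw [← Finset.sum_div, le_div_iff₀ (Nat.cast_pos.mpr (Nat.pos_of_ne_zero
          Subgroup.FiniteIndex.index_ne_zero))]
        exact_mod_cast hdouble
    _ = ∑ f ∈ F, ((orbit G f ∩ (X : Set U)).ncard : K) / (orbit G f).ncard :=
        Finset.sum_congr rfl fun f hf =>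
          (ncard_orbit_inter_div_ncard_orbit (iInf₂_le (κ := fun f => f ∈ F) f hf) _).symm

end MulAction

theorem stmt0_general {G U : Type*} [Group G] [MulAction G U] [DecidableEq U]
    (F X : Finset U) (k : ℕ)
    (horb : ∀ f ∈ F, ((orbit G f) ∩ (X : Set U)).Nonempty → (orbit G f).Finite)
    (hcov : ∀ g : G, k ≤ (F.filter (fun f => g • f ∈ X)).card) :
    (k : ℚ) ≤ ∑ f ∈ F,
      (((orbit G f ∩ (X : Set U)).ncard : ℚ) / ((orbit G f).ncard : ℚ)) := by
  classical
  set F₀ := F.filter fun f => (orbit G f ∩ (X : Set U)).Nonempty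
  have hcov₀ (g : G) : k ≤ (F₀.filter (g • · ∈ X)).card := by
    rw [Finset.filter_filter]
    refine (hcov g).trans_eq (congrArg _ (Finset.filter_congr fun f _ => ?_))
    exact ⟨fun hf => ⟨⟨_, mem_orbit f g, hf⟩, hf⟩, And.right⟩
  calc (k : ℚ)
      ≤ ∑ f ∈ F₀, ((orbit G f ∩ (X : Set U)).ncard : ℚ) / (orbit G f).ncard :=
        le_sum_ncard_orbit_inter_div_ncard_orbit F₀ X k
          (fun f hf => (Finset.mem_filter.mp hf).elim (horb f)) hcov₀
    _ ≤ _ := Finset.sum_le_sum_of_subset_of_nonneg (Finset.filter_subset _ _)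
        fun _ _ _ => by positivity

theorem stmt0 {G U : Type*} [Group G] [MulAction G U] [DecidableEq U]
    (F X : Finset U) (k : ℕ) (hk : 0 < k)
    (horb : ∀ f ∈ F, ((orbit G f) ∩ (X : Set U)).Nonempty → (orbit G f).Finite)
    (hcov : ∀ g : G, k ≤ (F.filter (fun f => g • f ∈ X)).card) :
    (k : ℚ) ≤ ∑ f ∈ F,
      (((orbit G f ∩ (X : Set U)).ncard : ℚ) / ((orbit G f).ncard : ℚ)) :=
  stmt0_general F X k horb hcov
end

section
/- Let a group G act on a set U, let 𝓕 be a G-invariant family of finite subsets of U of uniformly bounded cardinality, and let X ⊆ U be a finite set meeting every F ∈ 𝓕. Then there exists a G-invariant set Y ⊆ U meeting every F ∈ 𝓕 with |Y| ≤ |X| · max_{F∈𝓕} |F|. -/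
/-!
Call an orbit `O` heavy if `|O| ≤ m · |X ∩ O|`, and take for `Y` the union of the heavy orbits.
It is invariant, and counting orbit by orbit gives `|Y| ≤ m · |X|`.

Suppose some `F ∈ 𝓕` misses `Y`. Every `γ ∈ G` sends some `f ∈ F` into `X`, so `G` is covered by
the cosets `{γ | γ • f = x}` of the stabilizers `G_f`, one for each `f ∈ F` and `x ∈ X ∩ G • f`.
By B. H. Neumann's lemma the inverse indices of these cosets sum to at least `1`, that is,
`∑_{f ∈ F} |X ∩ G • f| / |G • f| ≥ 1`. But no orbit `G • f` is heavy, so each summand is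
`< 1/m`, and the sum is `< |F| / m ≤ 1`.
-/

open Pointwise MulAction Finset

theorem Finset.card_le_mul_card_of_card_fiber_le {α β : Type*} [DecidableEq β] (φ : α → β)
    {s t : Finset α} {m : ℕ}
    (h : ∀ a ∈ s, #{b ∈ s | φ b = φ a} ≤ m * #{b ∈ t | φ b = φ a}) : #s ≤ m * #t := by
  calc #s = ∑ c ∈ s.image φ, #{a ∈ s | φ a = c} :=
        card_eq_sum_card_fiberwise fun a ha => mem_image_of_mem φ ha
    _ ≤ ∑ c ∈ s.image φ, m * #{b ∈ t | φ b = c} := sum_le_sum (forall_mem_image.mpr h)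
    _ = m * #{b ∈ t | φ b ∈ s.image φ} := by rw [← mul_sum, sum_card_fiberwise_eq_card_filter]
    _ ≤ m * #t := Nat.mul_le_mul_left m (card_le_card (filter_subset _ _))

section HeavyOrbits

variable (G : Type*) {U : Type*} [Group G] [MulAction G U]

def heavyOrbits (X : Set U) (m : ℕ) : Set U :=
  {y | (orbit G y).Finite ∧ (orbit G y).ncard ≤ m * (X ∩ orbit G y).ncard}

variable {G}

theorem smul_heavyOrbits (X : Set U) (m : ℕ) (g : G) :
    g • heavyOrbits G X m = heavyOrbits G X m := by
  ext y
  rw [Set.mem_smul_set_iff_inv_smul_mem]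
  simp only [heavyOrbits, Set.mem_ofPred_eq, orbit_smul]

theorem inter_orbit_nonempty_of_mem_heavyOrbits {X : Set U} {m : ℕ} {y : U}
    (hy : y ∈ heavyOrbits G X m) : (X ∩ orbit G y).Nonempty := by
  rw [Set.nonempty_iff_ne_empty]
  intro h
  have := hy.2
  rw [h, Set.ncard_empty, mul_zero, Nat.le_zero, Set.ncard_eq_zero hy.1] at this
  exact (Set.nonempty_of_mem (mem_orbit_self y)).ne_empty this

theorem heavyOrbits_finite {X : Set U} (hX : X.Finite) (m : ℕ) :
    (heavyOrbits G X m).Finite := by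
  refine ((hX.inter_of_left (heavyOrbits G X m)).biUnion fun x hx => hx.2.1).subset
    fun y hy => ?_
  obtain ⟨x, hxX, hxy⟩ := inter_orbit_nonempty_of_mem_heavyOrbits hy
  have horbit : orbit G x = orbit G y := orbit_eq_iff.mpr hxy
  refine Set.mem_biUnion (x := x) ⟨hxX, ?_⟩ (horbit ▸ mem_orbit_self y)
  simpa only [heavyOrbits, Set.mem_ofPred_eq, horbit] using hy

theorem ncard_heavyOrbits_le {X : Set U} (hX : X.Finite) (m : ℕ) :
    (heavyOrbits G X m).ncard ≤ m * X.ncard := by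
  classical
  have hY := heavyOrbits_finite (G := G) hX m
  have hfiber {S : Set U} (hS : S.Finite) (y : U) :
      #{z ∈ hS.toFinset | orbit G z = orbit G y} = (S ∩ orbit G y).ncard := by
    rw [← Set.ncard_coe_finset]
    congr 1
    ext z
    simp [orbit_eq_iff]
  rw [Set.ncard_eq_toFinset_card _ hY, Set.ncard_eq_toFinset_card _ hX]
  refine card_le_mul_card_of_card_fiber_le (orbit G) fun y hy => ?_
  have hy : y ∈ heavyOrbits G X m := hY.mem_toFinset.mp hy
  have horbit : orbit G y ⊆ heavyOrbits G X m := by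
    rintro _ ⟨g, rfl⟩
    rw [← smul_heavyOrbits X m g]
    exact Set.smul_mem_smul_set hy
  rw [hfiber, hfiber, Set.inter_eq_right.mpr horbit]
  exact hy.2

theorem ncard_inter_orbit_div_lt_of_notMem_heavyOrbits {X : Set U} {m : ℕ} (hm : 0 < m) {y : U}
    (hy : y ∉ heavyOrbits G X m) :
    ((X ∩ orbit G y).ncard : ℚ) / (orbit G y).ncard < (m : ℚ)⁻¹ := by
  have hm' : (0 : ℚ) < m := Nat.cast_pos.mpr hm
  by_cases hfin : (orbit G y).Finite
  · have hlt : m * (X ∩ orbit G y).ncard < (orbit G y).ncard := by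
      simpa [heavyOrbits, hfin] using hy
    have hpos : (0 : ℚ) < (orbit G y).ncard := by exact_mod_cast Nat.zero_lt_of_lt hlt
    rw [div_lt_iff₀ hpos, inv_mul_eq_div, lt_div_iff₀ hm']
    exact_mod_cast (mul_comm m _ ▸ hlt)
  · rw [Set.Infinite.ncard hfin, Nat.cast_zero, div_zero]
    exact inv_pos.mpr hm'

end HeavyOrbits

/-- Infinite orbits have `ncard = 0`, so they contribute `0` to the sum. -/
theorem one_le_sum_ncard_inter_orbit_div {G U : Type*} [Group G] [MulAction G U] (F : Finset U)
    {X : Set U} (hX : X.Finite) (hcover : ∀ g : G, (X ∩ g • (F : Set U)).Nonempty) :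
    1 ≤ ∑ f ∈ F, ((X ∩ orbit G f).ncard : ℚ) / (orbit G f).ncard := by
  classical
  set P : Finset (U × U) := {p ∈ F ×ˢ hX.toFinset | p.2 ∈ orbit G p.1}
  choose! g hg using fun p : U × U =>
    (mem_orbit_iff.mp : p.2 ∈ orbit G p.1 → ∃ g : G, g • p.1 = p.2)
  -- `g p • stabilizer G f` is the set of `γ` with `γ • f = x`, for `p = (f, x)`.
  have hcovers : ⋃ p ∈ P, g p • (stabilizer G p.1 : Set G) = Set.univ := by
    refine Set.eq_univ_of_forall fun γ => ?_
    obtain ⟨_, hxX, f, hfF, rfl⟩ := hcover γ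
    have hp : (f, γ • f) ∈ P := by simp [P, Finset.mem_coe.mp hfF, hxX, mem_orbit]
    refine Set.mem_biUnion hp ?_
    rw [mem_leftCoset_iff, SetLike.mem_coe, mem_stabilizer_iff, mul_smul, inv_smul_eq_iff,
      hg _ (mem_orbit f γ)]
  have hfiber (f : U) : #{x ∈ hX.toFinset | x ∈ orbit G f} = (X ∩ orbit G f).ncard := by
    rw [← Set.ncard_coe_finset]
    congr 1
    ext x
    simp
  calc (1 : ℚ) ≤ ∑ p ∈ P, ((stabilizer G p.1).index : ℚ)⁻¹ :=
        Subgroup.one_le_sum_inv_index_of_leftCoset_cover hcovers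
    _ = ∑ f ∈ F, ((X ∩ orbit G f).ncard : ℚ) / (orbit G f).ncard := by
        rw [sum_filter, sum_product]
        refine sum_congr rfl fun f _ => ?_
        dsimp only
        rw [← sum_filter, sum_const, nsmul_eq_mul, hfiber, index_stabilizer, div_eq_mul_inv]

theorem heavyOrbits_inter_nonempty {G U : Type*} [Group G] [MulAction G U] {F X : Set U} {m : ℕ}
    (hF : F.Finite) (hFm : F.ncard ≤ m) (hX : X.Finite) (hcover : ∀ g : G, (X ∩ g • F).Nonempty) :
    (heavyOrbits G X m ∩ F).Nonempty := by
  by_contra hdisj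
  have hlight : ∀ f ∈ F, f ∉ heavyOrbits G X m := fun f hf hheavy => hdisj ⟨f, hheavy, hf⟩
  have hFne : F.Nonempty := by simpa using (hcover 1).mono Set.inter_subset_right
  have hm : 0 < m := ((Set.ncard_pos hF).mpr hFne).trans_le hFm
  have hm' : (0 : ℚ) < m := Nat.cast_pos.mpr hm
  have hcover' : ∀ g : G, (X ∩ g • (hF.toFinset : Set U)).Nonempty := by simpa using hcover
  refine lt_irrefl (1 : ℚ) ?_
  calc (1 : ℚ) ≤ ∑ f ∈ hF.toFinset, ((X ∩ orbit G f).ncard : ℚ) / (orbit G f).ncard :=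
        one_le_sum_ncard_inter_orbit_div hF.toFinset hX hcover'
    _ < ∑ f ∈ hF.toFinset, (m : ℚ)⁻¹ :=
        sum_lt_sum_of_nonempty (by simpa using hFne) fun f hf =>
          ncard_inter_orbit_div_lt_of_notMem_heavyOrbits hm (hlight f (by simpa using hf))
    _ = F.ncard / m := by
        rw [sum_const, nsmul_eq_mul, ← Set.ncard_eq_toFinset_card _ hF, div_eq_mul_inv]
    _ ≤ 1 := (div_le_one hm').mpr (by exact_mod_cast hFm)

theorem stmt2 {G U : Type*} [Group G] [MulAction G U]
    (𝓕 : Set (Set U)) (m : ℕ)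
    (hfin : ∀ F ∈ 𝓕, F.Finite ∧ F.ncard ≤ m)
    (hinv : ∀ (g : G), ∀ F ∈ 𝓕, g • F ∈ 𝓕)
    (X : Set U) (hX : X.Finite)
    (hrep : ∀ F ∈ 𝓕, (X ∩ F).Nonempty) :
    ∃ Y : Set U, Y.Finite ∧ (∀ g : G, g • Y = Y) ∧
      (∀ F ∈ 𝓕, (Y ∩ F).Nonempty) ∧ Y.ncard ≤ m * X.ncard :=
  ⟨heavyOrbits G X m, heavyOrbits_finite hX m, smul_heavyOrbits X m,
    fun F hF => heavyOrbits_inter_nonempty (hfin F hF).1 (hfin F hF).2 hX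
      fun g => hrep _ (hinv g F hF),
    ncard_heavyOrbits_le hX m⟩
end

section
/- Every finite bipartite graph admits a minimum vertex cover that is invariant under all automorphisms of the graph preserving the two parts of the bipartition. Specifically, if A and B are the two parts, the set consisting of those vertices of A that belong to every minimum vertex cover, together with those vertices of B that belong to at least one minimum vertex cover, is a minimum vertex cover, and it is invariant under all part-preserving automorphisms. -/
/-! In a bipartite graph with sides `A` and `Aᶜ`, two minimum vertex covers `C₁`, `C₂` recombine
into the covers `A.ite (C₁ ∩ C₂) (C₁ ∪ C₂)` and `A.ite (C₁ ∪ C₂) (C₁ ∩ C₂)`. These have union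
`C₁ ∪ C₂` and intersection `C₁ ∩ C₂`, so their sizes add up to `|C₁| + |C₂|` and both are minimum.
Iterating over the finitely many minimum covers makes `A.ite (⋂₀ S) (⋃₀ S)`, `S` the family of
all minimum covers, a minimum cover; automorphisms fixing `A` permute `S`, so they fix it. -/

/-- `C` is a vertex cover of the graph `G`. -/
def IsVertexCover {V : Type*} (G : SimpleGraph V) (C : Set V) : Prop :=
  ∀ u v : V, G.Adj u v → u ∈ C ∨ v ∈ C

/-- `C` is a minimum vertex cover of the graph `G`. -/
def IsMinVertexCover {V : Type*} (G : SimpleGraph V) (C : Set V) : Prop :=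
  IsVertexCover G C ∧ ∀ C' : Set V, IsVertexCover G C' → C.ncard ≤ C'.ncard

open Set

namespace Set

variable {α : Type*} {t s s' : Set α} {x : α}

lemma mem_ite_of_mem (hx : x ∈ t) : x ∈ t.ite s s' ↔ x ∈ s := by
  simp [Set.ite, hx]

lemma mem_ite_of_notMem (hx : x ∉ t) : x ∈ t.ite s s' ↔ x ∈ s' := by
  simp [Set.ite, hx]

lemma ite_union_ite_swap : t.ite s s' ∪ t.ite s' s = s ∪ s' := by
  ext x
  by_cases hx : x ∈ t <;> simp [mem_ite_of_mem, mem_ite_of_notMem, hx, or_comm]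

lemma ite_inter_ite_swap : t.ite s s' ∩ t.ite s' s = s ∩ s' := by
  ext x
  by_cases hx : x ∈ t <;> simp [mem_ite_of_mem, mem_ite_of_notMem, hx, and_comm]

end Set

section

variable {V W : Type*} {G : SimpleGraph V} {H : SimpleGraph W}

lemma IsVertexCover.comap (f : G →g H) {C : Set W} (hC : IsVertexCover H C) :
    IsVertexCover G (f ⁻¹' C) :=
  fun _ _ huv => hC _ _ (f.map_adj huv)

lemma IsMinVertexCover.comap (φ : G ≃g H) {C : Set W} (hC : IsMinVertexCover H C) :
    IsMinVertexCover G (φ ⁻¹' C) := by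
  refine ⟨hC.1.comap φ.toHom, fun C' hC' => ?_⟩
  calc (φ ⁻¹' C).ncard = C.ncard :=
        ncard_preimage_of_injective_subset_range φ.injective (by simp)
    _ ≤ (φ.symm ⁻¹' C').ncard := hC.2 _ (hC'.comap φ.symm.toHom)
    _ = C'.ncard := ncard_preimage_of_injective_subset_range φ.symm.injective (by simp)

lemma image_preimage_setOf_isMinVertexCover (φ : G ≃g G) :
    preimage φ '' {C | IsMinVertexCover G C} = {C | IsMinVertexCover G C} := by
  refine Subset.antisymm (image_subset_iff.2 fun C hC => hC.comap φ) fun C hC => ?_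
  exact ⟨φ.symm ⁻¹' C, IsMinVertexCover.comap φ.symm hC, by ext; simp⟩

lemma exists_isMinVertexCover [Finite V] (G : SimpleGraph V) : ∃ C, IsMinVertexCover G C := by
  obtain ⟨C, hC, hmin⟩ := exists_min_image {C | IsVertexCover G C} ncard (toFinite _)
    ⟨univ, fun u _ _ => .inl (mem_univ u)⟩
  exact ⟨C, hC, hmin⟩

lemma IsMinVertexCover.ncard_eq {C₁ C₂ : Set V} (h₁ : IsMinVertexCover G C₁)
    (h₂ : IsMinVertexCover G C₂) : C₁.ncard = C₂.ncard :=
  le_antisymm (h₁.2 _ h₂.1) (h₂.2 _ h₁.1)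

lemma IsMinVertexCover.of_union_inter [Finite V] {C₁ C₂ M M' : Set V}
    (h₁ : IsMinVertexCover G C₁) (h₂ : IsMinVertexCover G C₂)
    (hM : IsVertexCover G M) (hM' : IsVertexCover G M')
    (hunion : M ∪ M' = C₁ ∪ C₂) (hinter : M ∩ M' = C₁ ∩ C₂) : IsMinVertexCover G M := by
  have hsum : M.ncard + M'.ncard = C₁.ncard + C₂.ncard := by
    rw [← ncard_union_add_ncard_inter M M', ← ncard_union_add_ncard_inter C₁ C₂, hunion, hinter]
  have hle₁ := h₁.2 M hM
  have hle₂ := h₁.2 M' hM'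
  have hM_card : M.ncard = C₁.ncard := by
    have := h₁.ncard_eq h₂
    omega
  exact ⟨hM, fun C' hC' => hM_card ▸ h₁.2 C' hC'⟩

variable {A : Set V}

lemma IsVertexCover.ite_inter_union {B : Set V} (hAB : G.IsBipartiteWith A B) {C₁ C₂ : Set V}
    (h₁ : IsVertexCover G C₁) (h₂ : IsVertexCover G C₂) :
    IsVertexCover G (A.ite (C₁ ∩ C₂) (C₁ ∪ C₂)) := by
  intro u v huv
  have e₁ := h₁ u v huv
  have e₂ := h₂ u v huv
  rcases hAB.mem_of_adj huv with ⟨hu, hv⟩ | ⟨hu, hv⟩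
  · rw [mem_ite_of_mem hu, mem_ite_of_notMem (hAB.disjoint.notMem_of_mem_right hv), mem_inter_iff,
      mem_union]
    tauto
  · rw [mem_ite_of_notMem (hAB.disjoint.notMem_of_mem_right hu), mem_ite_of_mem hv, mem_inter_iff,
      mem_union]
    tauto

lemma IsMinVertexCover.ite_inter_union [Finite V] (hA : G.IsBipartiteWith A Aᶜ)
    {C₁ C₂ : Set V} (h₁ : IsMinVertexCover G C₁) (h₂ : IsMinVertexCover G C₂) :
    IsMinVertexCover G (A.ite (C₁ ∩ C₂) (C₁ ∪ C₂)) := by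
  have hM' : IsVertexCover G (A.ite (C₁ ∪ C₂) (C₁ ∩ C₂)) := by
    rw [← ite_compl]
    exact h₁.1.ite_inter_union hA.symm h₂.1
  refine h₁.of_union_inter h₂ (h₁.1.ite_inter_union hA h₂.1) hM' ?_ ?_
  · exact ite_union_ite_swap.trans (union_eq_right.2 (inter_subset_left.trans subset_union_left))
  · exact ite_inter_ite_swap.trans (inter_eq_left.2 (inter_subset_left.trans subset_union_left))

lemma IsMinVertexCover.ite_sInter_sUnion_insert [Finite V] (hA : G.IsBipartiteWith A Aᶜ)
    {C : Set V} (hC : IsMinVertexCover G C) {S : Set (Set V)} (hS : S.Finite)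
    (hmin : ∀ D ∈ S, IsMinVertexCover G D) :
    IsMinVertexCover G (A.ite (⋂₀ insert C S) (⋃₀ insert C S)) := by
  induction S, hS using Set.Finite.induction_on with
  | empty => simpa using hC
  | @insert D S _ _ ih =>
    have hD := hmin D (mem_insert D S)
    have hM := ih fun E hE => hmin E (mem_insert_of_mem D hE)
    rw [insert_comm, sInter_insert, sUnion_insert]
    convert hD.ite_inter_union hA hM using 1
    ext x
    by_cases hx : x ∈ A <;> simp [mem_ite_of_mem, mem_ite_of_notMem, hx]

lemma IsMinVertexCover.ite_sInter_sUnion [Finite V] (hA : G.IsBipartiteWith A Aᶜ)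
    {S : Set (Set V)} (hS : S.Nonempty) (hmin : ∀ C ∈ S, IsMinVertexCover G C) :
    IsMinVertexCover G (A.ite (⋂₀ S) (⋃₀ S)) := by
  obtain ⟨C, hC⟩ := hS
  rw [← insert_eq_of_mem hC]
  exact (hmin C hC).ite_sInter_sUnion_insert hA (toFinite S) hmin

lemma image_ite_sInter_sUnion_setOf_isMinVertexCover (φ : G ≃g G) (hφ : φ '' A = A) :
    φ '' A.ite (⋂₀ {C | IsMinVertexCover G C}) (⋃₀ {C | IsMinVertexCover G C}) =
      A.ite (⋂₀ {C | IsMinVertexCover G C}) (⋃₀ {C | IsMinVertexCover G C}) := by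
  rw [RelIso.image_eq_preimage_symm] at hφ ⊢
  rw [preimage_ite, hφ, preimage_sInter, preimage_sUnion, ← sInter_image, ← sUnion_image,
    image_preimage_setOf_isMinVertexCover]

end

theorem stmt5 {V : Type*} [Fintype V] (G : SimpleGraph V) (A B : Set V)
    (hdisj : Disjoint A B) (hunion : A ∪ B = Set.univ)
    (hbip : ∀ u v : V, G.Adj u v → (u ∈ A ∧ v ∈ B) ∨ (u ∈ B ∧ v ∈ A)) :
    IsMinVertexCover G
      (({a ∈ A | ∀ C : Set V, IsMinVertexCover G C → a ∈ C}) ∪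
       ({b ∈ B | ∃ C : Set V, IsMinVertexCover G C ∧ b ∈ C})) ∧
    ∀ φ : G ≃g G, φ '' A = A → φ '' B = B →
      φ '' (({a ∈ A | ∀ C : Set V, IsMinVertexCover G C → a ∈ C}) ∪
            ({b ∈ B | ∃ C : Set V, IsMinVertexCover G C ∧ b ∈ C})) =
        (({a ∈ A | ∀ C : Set V, IsMinVertexCover G C → a ∈ C}) ∪
         ({b ∈ B | ∃ C : Set V, IsMinVertexCover G C ∧ b ∈ C})) := by
  obtain rfl : Aᶜ = B := (IsCompl.of_eq hdisj.eq_bot hunion).compl_eq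
  have hT : {a ∈ A | ∀ C : Set V, IsMinVertexCover G C → a ∈ C} ∪
      {b ∈ Aᶜ | ∃ C : Set V, IsMinVertexCover G C ∧ b ∈ C} =
      A.ite (⋂₀ {C | IsMinVertexCover G C}) (⋃₀ {C | IsMinVertexCover G C}) := by
    ext x
    simp [Set.ite, and_comm]
  rw [hT]
  exact ⟨IsMinVertexCover.ite_sInter_sUnion ⟨hdisj, fun u v => hbip u v⟩
    (exists_isMinVertexCover G) fun _ hC => hC,
    fun φ hφ _ => image_ite_sInter_sUnion_setOf_isMinVertexCover φ hφ⟩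
end

section
/- If a group G is covered by finitely many left cosets g₁H₁, …, g_nH_n of subgroups H₁, …, H_n such that every element of G lies in at least k of these cosets, and all H_i have finite index, then ∑_{i=1}^n 1/[G : H_i] ≥ k. -/
/-!
All `H i` contain a normal subgroup `K` of finite index, and membership in `g i • H i` only
depends on the class modulo `K`, so the statement reduces to the finite group `Q = G ⧸ K`, whose
subgroups `H i / K` have the same indices. There, double counting the incidences between elements
and cosets gives `k * |Q| ≤ ∑ |H i / K| = ∑ |Q| / [G : H i]`.
-/

open Pointwise Finset

theorem Finset.card_mul_le_sum_card_of_forall_le {α ι : Type*} [Fintype α] [Fintype ι]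
    [DecidableEq α] (S : ι → Finset α) {k : ℕ} (h : ∀ a, k ≤ #{i | a ∈ S i}) :
    Fintype.card α * k ≤ ∑ i, #(S i) := by
  calc Fintype.card α * k = ∑ _a : α, k := by simp [mul_comm]
    _ ≤ ∑ a, #{i | a ∈ S i} := sum_le_sum fun a _ ↦ h a
    _ = ∑ i, #(S i) := by
      simpa [bipartiteAbove, bipartiteBelow] using
        sum_card_bipartiteAbove_eq_sum_card_bipartiteBelow (s := univ) (t := univ)
          (fun a i ↦ a ∈ S i)

theorem QuotientGroup.mk_mem_smul_map_mk'_iff {G : Type*} [Group G] {K H : Subgroup G} [K.Normal]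
    (hKH : K ≤ H) (g x : G) :
    (x : G ⧸ K) ∈ (g : G ⧸ K) • (H.map (QuotientGroup.mk' K) : Set (G ⧸ K)) ↔
      x ∈ g • (H : Set G) := by
  rw [mem_leftCoset_iff, mem_leftCoset_iff, ← QuotientGroup.mk_inv, ← QuotientGroup.mk_mul]
  change g⁻¹ * x ∈ (H.map (QuotientGroup.mk' K)).comap (QuotientGroup.mk' K) ↔ _
  rw [Subgroup.comap_map_eq_self (by rwa [QuotientGroup.ker_mk'])]
  rfl

theorem Subgroup.le_sum_inv_index_of_finite {Q ι : Type*} [Group Q] [Finite Q] [Fintype ι]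
    (k : ℕ) (H : ι → Subgroup Q) (g : ι → Q)
    (hcov : ∀ x : Q, k ≤ Nat.card {i : ι // x ∈ g i • (H i : Set Q)}) :
    (k : ℚ) ≤ ∑ i, 1 / ((H i).index : ℚ) := by
  classical
  have := Fintype.ofFinite Q
  have hcount : Fintype.card Q * k ≤ ∑ i, Nat.card (H i) := by
    refine (card_mul_le_sum_card_of_forall_le (fun i ↦ (g i • (H i : Set Q)).toFinset)
      fun x ↦ ?_).trans_eq (sum_congr rfl fun i _ ↦ ?_)
    · simpa [Nat.card_eq_fintype_card, Fintype.card_subtype, -Set.toFinset_smul_set] using hcov x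
    · rw [Set.toFinset_card, ← Nat.card_eq_fintype_card, Set.natCard_smul_set]; rfl
  have hQ : (0 : ℚ) < Fintype.card Q := by exact_mod_cast Fintype.card_pos
  have hsize : ∀ i, (Nat.card (H i) : ℚ) = Fintype.card Q * (1 / (H i).index) := fun i ↦ by
    rw [← Nat.card_eq_fintype_card, ← (H i).card_mul_index, Nat.cast_mul]
    field_simp [Nat.cast_ne_zero.mpr (H i).index_ne_zero_of_finite]
  rw [← mul_le_mul_iff_right₀ hQ, mul_sum, ← sum_congr rfl fun i _ ↦ hsize i]
  exact_mod_cast hcount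

theorem stmt6_general {G : Type*} [Group G] (n k : ℕ)
    (H : Fin n → Subgroup G) (g : Fin n → G)
    (hfi : ∀ i, (H i).index ≠ 0)
    (hcov : ∀ x : G, k ≤ Nat.card {i : Fin n // x ∈ g i • (H i : Set G)}) :
    (k : ℚ) ≤ ∑ i : Fin n, 1 / ((H i).index : ℚ) := by
  have : (⨅ i, H i).FiniteIndex := Subgroup.finiteIndex_iInf fun i ↦ ⟨hfi i⟩
  set K := (⨅ i, H i).normalCore
  have hKH (i : Fin n) : K ≤ H i := (Subgroup.normalCore_le _).trans (iInf_le _ i)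
  have hindex (i : Fin n) : ((H i).map (QuotientGroup.mk' K)).index = (H i).index :=
    Subgroup.index_map_eq _ (QuotientGroup.mk'_surjective K)
      (by rw [QuotientGroup.ker_mk']; exact hKH i)
  have hcovQ (q : G ⧸ K) : k ≤ Nat.card
      {i // q ∈ (g i : G ⧸ K) • ((H i).map (QuotientGroup.mk' K) : Set (G ⧸ K))} := by
    obtain ⟨x, rfl⟩ := QuotientGroup.mk_surjective q
    simpa only [QuotientGroup.mk_mem_smul_map_mk'_iff (hKH _)] using hcov x
  simpa only [hindex] using Subgroup.le_sum_inv_index_of_finite k _ _ hcovQ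

theorem stmt6 {G : Type*} [Group G] (n k : ℕ) (hk : 0 < k)
    (H : Fin n → Subgroup G) (g : Fin n → G)
    (hfi : ∀ i, (H i).index ≠ 0)
    (hcov : ∀ x : G, k ≤ Nat.card {i : Fin n // x ∈ g i • (H i : Set G)}) :
    (k : ℚ) ≤ ∑ i : Fin n, 1 / ((H i).index : ℚ) :=
  stmt6_general n k H g hfi hcov
end

section
/- If a group G is covered by finitely many left cosets of subgroups (each element of G covered at least k times), then after discarding the cosets of subgroups of infinite index, the remaining cosets still cover every element of G at least k times. -/
/-!
Let `N` be the intersection of the finite-index subgroups of the family; it has finite index, and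
membership in each finite-index coset is constant on every coset `x • N`. If `x` lay in fewer
than `k` finite-index cosets, so would every point of `x • N`, so `x • N` would be covered by the
infinite-index cosets alone. Translating by representatives of `G ⧸ N` would then cover `G` by
finitely many cosets of infinite-index subgroups, contradicting B. H. Neumann's lemma.
-/

open Pointwise

namespace Subgroup

variable {G : Type*} [Group G]

theorem mul_mem_leftCoset_iff {N H : Subgroup G} (hNH : N ≤ H) {m : G} (hm : m ∈ N) (g x : G) :
    x * m ∈ g • (H : Set G) ↔ x ∈ g • (H : Set G) := by
  rw [mem_leftCoset_iff, mem_leftCoset_iff, ← mul_assoc, SetLike.mem_coe, SetLike.mem_coe,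
    H.mul_mem_cancel_right (hNH hm)]

theorem exists_finiteIndex_of_leftCoset_cover_leftCoset {ι : Type*} {H : ι → Subgroup G}
    {g : ι → G} {s : Finset ι} {N : Subgroup G} [N.FiniteIndex] (x : G)
    (hcovers : x • (N : Set G) ⊆ ⋃ i ∈ s, g i • (H i : Set G)) :
    ∃ i ∈ s, (H i).FiniteIndex := by
  classical
  have : Fintype (G ⧸ N) := Fintype.ofFinite _
  have hcovers' : ⋃ p ∈ (Finset.univ : Finset (G ⧸ N)) ×ˢ s,
      ((p.1.out * x⁻¹ * g p.2) • (H p.2 : Set G)) = Set.univ := by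
    refine Set.eq_univ_of_forall fun y => ?_
    have hy : x * ((QuotientGroup.mk y : G ⧸ N).out⁻¹ * y) ∈ x • (N : Set G) :=
      Set.smul_mem_smul_set (QuotientGroup.leftRel_apply.mp (Quotient.exact (Quotient.out_eq _)))
    obtain ⟨i, hi, hxi⟩ := Set.mem_iUnion₂.mp (hcovers hy)
    refine Set.mem_iUnion₂.mpr ⟨(QuotientGroup.mk y, i), by simpa using hi, ?_⟩
    rw [mem_leftCoset_iff] at hxi ⊢
    simpa [mul_assoc] using hxi
  obtain ⟨p, hp, hfi⟩ := exists_finiteIndex_of_leftCoset_cover hcovers'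
  exact ⟨p.2, (Finset.mem_product.mp hp).2, hfi⟩

end Subgroup

open Subgroup in
theorem stmt7_general {G : Type*} [Group G] (n k : ℕ)
    (H : Fin n → Subgroup G) (g : Fin n → G)
    (hcov : ∀ x : G, k ≤ Nat.card {i : Fin n // x ∈ g i • (H i : Set G)}) :
    ∀ x : G, k ≤ Nat.card {i : Fin n // x ∈ g i • (H i : Set G) ∧ (H i).index ≠ 0} := by
  classical
  intro x
  by_contra! hlt
  let N : Subgroup G := ⨅ i : {i : Fin n // (H i).FiniteIndex}, H i
  have : N.FiniteIndex := finiteIndex_iInf fun i => i.2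
  have hNH (i : Fin n) (hi : (H i).index ≠ 0) : N ≤ H i :=
    iInf_le (fun j : {i : Fin n // (H i).FiniteIndex} => H j) ⟨i, ⟨hi⟩⟩
  have hcovers : x • (N : Set G) ⊆
      ⋃ i ∈ Finset.univ.filter (fun i => (H i).index = 0), g i • (H i : Set G) := by
    rintro _ ⟨m, hm, rfl⟩
    by_contra! hout
    have hsub : {i | x * m ∈ g i • (H i : Set G)} ⊆
        {i | x ∈ g i • (H i : Set G) ∧ (H i).index ≠ 0} := fun i hi => by
      have hfi : (H i).index ≠ 0 := fun h0 =>
        hout (Set.mem_iUnion₂.mpr ⟨i, by simpa using h0, hi⟩)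
      exact ⟨(mul_mem_leftCoset_iff (hNH i hfi) hm _ _).mp hi, hfi⟩
    exact (hcov (x * m)).trans (Nat.card_mono (Set.toFinite _) hsub) |>.not_gt hlt
  obtain ⟨i, hi, hfi⟩ := exists_finiteIndex_of_leftCoset_cover_leftCoset x hcovers
  exact hfi.index_ne_zero (Finset.mem_filter.mp hi).2

theorem stmt7 {G : Type*} [Group G] (n k : ℕ) (hk : 0 < k)
    (H : Fin n → Subgroup G) (g : Fin n → G)
    (hcov : ∀ x : G, k ≤ Nat.card {i : Fin n // x ∈ g i • (H i : Set G)}) :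
    ∀ x : G, k ≤ Nat.card {i : Fin n // x ∈ g i • (H i : Set G) ∧ (H i).index ≠ 0} :=
  stmt7_general n k H g hcov
end

section
/- Let Γ be a graph and K a finite graph with v vertices. If Γ contains a finite set X of vertices such that every subgraph of Γ isomorphic to K contains a vertex from X, then Γ contains an Aut(Γ)-invariant set Y of vertices such that every subgraph of Γ isomorphic to K contains a vertex from Y, and |Y| ≤ v·|X|. -/
/-!
Let `Aut Γ` act on the vertices and call a vertex rich if its orbit `O` is finite with
`|O| ≤ v * |O ∩ X|`. The rich vertices form a union of orbits, hence an invariant set `Y`, and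
summing over its orbits gives `|Y| ≤ v * |Y ∩ X| ≤ v * |X|`. `Y` meets every copy `φ` of `K`:
since `g ∘ φ` meets `X` for every automorphism `g`, the sets `{g | g (φ a) = x}` with `x ∈ X`,
which are left cosets of the stabilisers of the `φ a` of index `|orbit (φ a)|`, cover `Aut Γ`.
By B. H. Neumann's lemma `∑ₐ |orbit (φ a) ∩ X| / |orbit (φ a)| ≥ 1`, so some `φ a` is rich.
-/

open MulAction Finset
open scoped Pointwise

theorem Set.ncard_le_mul_ncard_inter_of_fibers {α β : Type*} {s : Set α} (t : Set α)
    (hs : s.Finite) (f : α → β) {v : ℕ}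
    (h : ∀ a ∈ s, {x ∈ s | f x = f a}.ncard ≤ v * {x ∈ s ∩ t | f x = f a}.ncard) :
    s.ncard ≤ v * (s ∩ t).ncard := by
  classical
  lift s to Finset α using hs
  have hfiber (u : Finset α) (b : β) :
      {x ∈ (u : Set α) | f x = b}.ncard = #{x ∈ u | f x = b} := by
    rw [← Set.ncard_coe_finset, coe_filter]; rfl
  have hst : (s : Set α) ∩ t = ({x ∈ s | x ∈ t} : Finset α) := by ext; simp
  rw [hst, Set.ncard_coe_finset, Set.ncard_coe_finset,
    card_eq_sum_card_fiberwise (t := s.image f) fun a ha => Finset.mem_image_of_mem f ha,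
    card_eq_sum_card_fiberwise (t := s.image f)
      fun a ha => Finset.mem_image_of_mem f (mem_filter.1 ha).1,
    mul_sum]
  refine sum_le_sum fun b hb => ?_
  obtain ⟨a, ha, rfl⟩ := Finset.mem_image.1 hb
  simpa only [hfiber, hst] using h a ha

namespace MulAction

variable {G V : Type*} [Group G] [MulAction G V]

def richOrbitPoints (G : Type*) [Group G] [MulAction G V] (X : Set V) (v : ℕ) : Set V :=
  {y | (orbit G y).Finite ∧ (orbit G y).ncard ≤ v * (orbit G y ∩ X).ncard}

variable {X : Set V} {v : ℕ}

theorem mem_richOrbitPoints_iff_of_mem_orbit {y z : V} (h : z ∈ orbit G y) :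
    z ∈ richOrbitPoints G X v ↔ y ∈ richOrbitPoints G X v := by
  simp only [richOrbitPoints, Set.mem_ofPred_eq, orbit_eq_iff.2 h]

theorem smul_mem_richOrbitPoints_iff (g : G) {y : V} :
    g • y ∈ richOrbitPoints G X v ↔ y ∈ richOrbitPoints G X v :=
  mem_richOrbitPoints_iff_of_mem_orbit (mem_orbit y g)

theorem image_smul_richOrbitPoints (g : G) :
    (g • ·) '' richOrbitPoints G X v = richOrbitPoints G X v := by
  rw [show (g • · : V → V) = toPerm g from rfl, Equiv.image_eq_preimage_symm]
  ext y
  exact smul_mem_richOrbitPoints_iff g⁻¹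

theorem orbit_inter_nonempty_of_mem_richOrbitPoints {y : V} (hy : y ∈ richOrbitPoints G X v) :
    (orbit G y ∩ X).Nonempty := by
  refine Set.nonempty_of_ncard_ne_zero fun h => ?_
  have hle := hy.2
  rw [h, mul_zero, Nat.le_zero, Set.ncard_eq_zero hy.1] at hle
  exact hle.subset (mem_orbit_self y)

theorem richOrbitPoints_finite (hX : X.Finite) : (richOrbitPoints G X v).Finite := by
  refine ((hX.inter_of_left (richOrbitPoints G X v)).biUnion fun x hx => hx.2.1).subset
    fun y hy => ?_
  obtain ⟨x, hxy, hxX⟩ := orbit_inter_nonempty_of_mem_richOrbitPoints hy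
  exact Set.mem_biUnion ⟨hxX, (mem_richOrbitPoints_iff_of_mem_orbit hxy).2 hy⟩
    (mem_orbit_symm.1 hxy)

theorem setOf_mem_richOrbitPoints_orbit_eq {a : V} (ha : a ∈ richOrbitPoints G X v) :
    {x ∈ richOrbitPoints G X v | orbit G x = orbit G a} = orbit G a := by
  ext x
  exact ⟨fun h => orbit_eq_iff.1 h.2,
    fun h => ⟨(mem_richOrbitPoints_iff_of_mem_orbit h).2 ha, orbit_eq_iff.2 h⟩⟩

theorem ncard_richOrbitPoints_le (hX : X.Finite) :
    (richOrbitPoints G X v).ncard ≤ v * X.ncard := by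
  calc (richOrbitPoints G X v).ncard ≤ v * (richOrbitPoints G X v ∩ X).ncard := by
        refine Set.ncard_le_mul_ncard_inter_of_fibers X (richOrbitPoints_finite hX) (orbit G)
          fun a ha => ?_
        have hfiberX :
            {x ∈ richOrbitPoints G X v ∩ X | orbit G x = orbit G a} = orbit G a ∩ X := by
          ext x
          have hx := Set.ext_iff.1 (setOf_mem_richOrbitPoints_orbit_eq ha) x
          simp only [Set.mem_inter_iff, Set.mem_ofPred_eq] at hx ⊢
          tauto
        rw [setOf_mem_richOrbitPoints_orbit_eq ha, hfiberX]
        exact ha.2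
    _ ≤ v * X.ncard := Nat.mul_le_mul_left _ (Set.ncard_le_ncard Set.inter_subset_right hX)

theorem one_le_sum_ncard_orbit_inter_div {ι : Type*} [Fintype ι] (hX : X.Finite) (C : ι → V)
    (hC : ∀ g : G, ∃ a, g • C a ∈ X) :
    1 ≤ ∑ a, ((orbit G (C a) ∩ X).ncard : ℚ) / (orbit G (C a)).ncard := by
  classical
  let s : Finset (ι × V) := {i ∈ univ ×ˢ hX.toFinset | i.2 ∈ orbit G (C i.1)}
  have hcover : ⋃ i ∈ s,
      Function.invFun (fun g : G => g • C i.1) i.2 • (stabilizer G (C i.1) : Set G) = Set.univ := by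
    refine Set.eq_univ_of_forall fun g => ?_
    obtain ⟨a, ha⟩ := hC g
    have hrep : Function.invFun (fun g : G => g • C a) (g • C a) • C a = g • C a :=
      Function.invFun_eq (f := fun g : G => g • C a) ⟨g, rfl⟩
    refine Set.mem_biUnion (x := (a, g • C a)) (by simp [s, ha, mem_orbit]) ?_
    rw [mem_leftCoset_iff, SetLike.mem_coe, mem_stabilizer_iff, mul_smul, inv_smul_eq_iff]
    exact hrep.symm
  calc 1 ≤ ∑ i ∈ s, ((stabilizer G (C i.1)).index : ℚ)⁻¹ :=
        Subgroup.one_le_sum_inv_index_of_leftCoset_cover hcover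
    _ = ∑ a, ((orbit G (C a) ∩ X).ncard : ℚ) / (orbit G (C a)).ncard := by
      rw [sum_filter, sum_product]
      refine sum_congr rfl fun a _ => ?_
      dsimp only
      rw [← sum_filter, sum_const, nsmul_eq_mul, index_stabilizer, div_eq_mul_inv,
        ← Set.ncard_coe_finset]
      congr 3
      ext x
      simp [and_comm]

theorem exists_mem_richOrbitPoints {ι : Type*} [Fintype ι] (hX : X.Finite) (C : ι → V)
    (hC : ∀ g : G, ∃ a, g • C a ∈ X) :
    ∃ a, C a ∈ richOrbitPoints G X (Fintype.card ι) := by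
  have : Nonempty ι := ⟨(hC 1).choose⟩
  have hv : (0 : ℚ) < Fintype.card ι := by exact_mod_cast Fintype.card_pos
  have hsum : ∑ _a : ι, ((Fintype.card ι : ℚ))⁻¹ = 1 := by
    rw [sum_const, card_univ, nsmul_eq_mul, mul_inv_cancel₀ hv.ne']
  obtain ⟨a, -, ha⟩ := exists_le_of_sum_le univ_nonempty
    (hsum.trans_le (one_le_sum_ncard_orbit_inter_div hX C hC))
  -- an infinite orbit has `ncard = 0`, so its term of the sum is `0`
  have hn : 0 < (orbit G (C a)).ncard := by
    refine Nat.pos_of_ne_zero fun hn => ?_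
    rw [hn, Nat.cast_zero, div_zero] at ha
    exact (inv_pos.2 hv).not_ge ha
  refine ⟨a, Set.finite_of_ncard_pos hn, ?_⟩
  rw [le_div_iff₀ (by exact_mod_cast hn), inv_mul_le_iff₀ hv] at ha
  exact_mod_cast ha

end MulAction

theorem stmt11 {V VK : Type*} [Fintype VK]
    (Γ : SimpleGraph V) (K : SimpleGraph VK)
    (X : Set V) (hX : X.Finite)
    (hrep : ∀ φ : K ↪g Γ, ∃ a : VK, φ a ∈ X) :
    ∃ Y : Set V, Y.Finite ∧
      (∀ ψ : Γ ≃g Γ, ψ '' Y = Y) ∧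
      (∀ φ : K ↪g Γ, ∃ a : VK, φ a ∈ Y) ∧
      Y.ncard ≤ Fintype.card VK * X.ncard := by
  refine ⟨richOrbitPoints (Γ ≃g Γ) X (Fintype.card VK), richOrbitPoints_finite hX,
    image_smul_richOrbitPoints, fun φ => ?_, ncard_richOrbitPoints_le hX⟩
  exact exists_mem_richOrbitPoints hX φ fun ψ => hrep (ψ.toEmbedding.comp φ)
end

section
/- Let K₀ be a finite connected vertex-transitive graph with at least one edge, and let e be any edge of K₀. Then the graph obtained from K₀ by deleting e is connected. -/
/-!
If `e = ab` were a bridge, vertex-transitivity would put every vertex on a bridge. Among all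
bridges `uv`, pick one for which the component of `u` in `G - uv` is smallest. If `u` had a
neighbour `w ≠ v`, a bridge `pq` at `w` could be oriented so that the component of `p` in `G - pq`
avoids `u`; it would then lie strictly inside the component of `u` in `G - uv`. Hence `u` has
degree one. By transitivity `G` is then `1`-regular, and a connected `1`-regular graph has at most
two vertices.
-/

namespace SimpleGraph

variable {V W : Type*} {G : SimpleGraph V} {G' : SimpleGraph W}

def Iso.deleteEdges (φ : G ≃g G') (s : Set (Sym2 V)) :
    G.deleteEdges s ≃g G'.deleteEdges (Sym2.map φ '' s) where
  toEquiv := φ.toEquiv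
  map_rel_iff' {a b} := by
    change (G'.deleteEdges _).Adj (φ a) (φ b) ↔ _
    rw [deleteEdges_adj, deleteEdges_adj, φ.map_adj_iff, ← Sym2.map_mk,
      (Sym2.map.injective φ.injective).mem_set_image]

theorem Iso.isBridge_iff (φ : G ≃g G') {u v : V} :
    G'.IsBridge s(φ u, φ v) ↔ G.IsBridge s(u, v) := by
  simp only [SimpleGraph.isBridge_iff, ← (φ.deleteEdges {s(u, v)}).reachable_iff (u := u),
    Set.image_singleton, Sym2.map_mk]
  rfl

theorem Reachable.deleteEdges_or {u v z : V} (h : G.Reachable u z) :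
    (G.deleteEdges {s(u, v)}).Reachable u z ∨ (G.deleteEdges {s(u, v)}).Reachable v z := by
  rw [reachable_iff_reflTransGen] at h
  induction h with
  | refl => exact .inl .rfl
  | @tail b c _ hbc ih =>
    by_cases hbc' : s(b, c) = s(u, v)
    · rcases Sym2.eq_iff.mp hbc' with ⟨-, rfl⟩ | ⟨-, rfl⟩
      exacts [.inr .rfl, .inl .rfl]
    · have hadj : (G.deleteEdges {s(u, v)}).Adj b c := by simp [hbc, hbc']
      exact ih.imp (·.trans hadj.reachable) (·.trans hadj.reachable)

theorem IsBridge.exists_not_reachable {w x : V} (hb : G.IsBridge s(w, x)) (u : V) :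
    ∃ p q, s(p, q) = s(w, x) ∧ ¬(G.deleteEdges {s(p, q)}).Reachable p u := by
  by_cases hwu : (G.deleteEdges {s(w, x)}).Reachable w u
  · exact ⟨x, w, Sym2.eq_swap, fun hxu ↦ hb (hwu.trans (Sym2.eq_swap ▸ hxu).symm)⟩
  · exact ⟨w, x, rfl, hwu⟩

theorem IsBridge.setOf_reachable_ssubset {u v p q : V} (hb : G.IsBridge s(u, v))
    (huv : G.Adj u v) (hup : (G.deleteEdges {s(u, v)}).Reachable u p)
    (hpu : ¬(G.deleteEdges {s(p, q)}).Reachable p u) :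
    {z | (G.deleteEdges {s(p, q)}).Reachable p z} ⊂
      {z | (G.deleteEdges {s(u, v)}).Reachable u z} := by
  classical
  have hpq : s(p, q) ≠ s(u, v) := by
    rintro hpq
    rcases Sym2.eq_iff.mp hpq with ⟨rfl, -⟩ | ⟨rfl, -⟩
    exacts [hpu .rfl, hb hup]
  refine (Set.ssubset_iff_of_subset fun z hpz ↦ ?_).mpr ⟨u, .rfl, hpu⟩
  have huz : G.Reachable u z :=
    (hup.mono (deleteEdges_le _)).trans (hpz.mono (deleteEdges_le _))
  refine huz.deleteEdges_or.resolve_right fun ⟨W⟩ ↦ ?_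
  -- A walk from `v` in `G - uv` cannot visit `p`, which lies on `u`'s side; so it avoids `pq`.
  by_cases hpW : p ∈ W.support
  · exact hb (hup.trans ⟨(W.takeUntil p hpW).reverse⟩)
  have hvz : (G.deleteEdges {s(p, q)}).Reachable v z :=
    ⟨(W.toDeleteEdges {s(p, q)} fun e he ↦ by
      rintro rfl; exact hpW (W.fst_mem_support_of_mem_edges he)).mapLe
      (deleteEdges_mono (deleteEdges_le _))⟩
  have hvu : (G.deleteEdges {s(p, q)}).Adj v u := by simp [huv.symm, Sym2.eq_swap, hpq.symm]
  exact hpu (hpz.trans (hvz.symm.trans hvu.reachable))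

theorem exists_existsUnique_adj_of_forall_isBridge [Finite V] [Nonempty V]
    (h : ∀ v, ∃ w, G.Adj v w ∧ G.IsBridge s(v, w)) : ∃ v, ∃! w, G.Adj v w := by
  let S : Set (V × V) := {e | G.Adj e.1 e.2 ∧ G.IsBridge s(e.1, e.2)}
  obtain ⟨⟨u, v⟩, ⟨huv, hb⟩, hmin⟩ := S.exists_min_image
    (fun e ↦ {z | (G.deleteEdges {s(e.1, e.2)}).Reachable e.1 z}.ncard) S.toFinite
    (let ⟨w, hw⟩ := h (Classical.arbitrary V); ⟨(_, w), hw⟩)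
  refine ⟨u, v, huv, fun w huw ↦ by_contra fun hwv ↦ ?_⟩
  obtain ⟨x, hwx, hbw⟩ := h w
  have huw' : (G.deleteEdges {s(u, v)}).Adj u w := by simp [huw, hwv, huv.ne]
  have hwx' : (G.deleteEdges {s(u, v)}).Adj w x := by simp [hwx, hwv, huw.ne.symm]
  obtain ⟨p, q, hpq, hpu⟩ := hbw.exists_not_reachable u
  have hup : (G.deleteEdges {s(u, v)}).Reachable u p := by
    rcases Sym2.eq_iff.mp hpq with ⟨rfl, -⟩ | ⟨rfl, -⟩
    exacts [huw'.reachable, huw'.reachable.trans hwx'.reachable]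
  have hpqS : (p, q) ∈ S := ⟨by rw [← mem_edgeSet, hpq]; exact hwx, by rwa [hpq]⟩
  exact (hmin _ hpqS).not_gt (Set.ncard_lt_ncard (hb.setOf_reachable_ssubset huv hup hpu))

theorem Connected.card_le_two_of_isRegularOfDegree_one [Fintype V] [DecidableRel G.Adj]
    (hG : G.Connected) (hreg : G.IsRegularOfDegree 1) : Fintype.card V ≤ 2 := by
  have hsum := G.sum_degrees_eq_twice_card_edges
  have hcard := hG.card_vert_le_card_edgeSet_add_one
  simp only [hreg.degree_eq, Finset.sum_const, Finset.card_univ, smul_eq_mul, mul_one] at hsum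
  rw [Nat.card_eq_fintype_card, Nat.card_eq_fintype_card, ← edgeFinset_card] at hcard
  omega

end SimpleGraph

theorem stmt12 {V : Type*} [Fintype V] (K₀ : SimpleGraph V)
    (hconn : K₀.Connected)
    (htrans : ∀ u v : V, ∃ ψ : K₀ ≃g K₀, ψ u = v)
    (hcard : 3 ≤ Fintype.card V)
    (e : Sym2 V) (he : e ∈ K₀.edgeSet) :
    (K₀.deleteEdges {e}).Connected := by
  classical
  induction e using Sym2.ind with | _ a b => ?_
  by_contra hdisc
  have hbridge : K₀.IsBridge s(a, b) :=
    not_not.mp (mt hconn.connected_delete_edge_of_not_isBridge hdisc)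
  have hall : ∀ v, ∃ w, K₀.Adj v w ∧ K₀.IsBridge s(v, w) := fun v ↦ by
    obtain ⟨ψ, rfl⟩ := htrans a v
    exact ⟨ψ b, ψ.map_adj_iff.mpr he, ψ.isBridge_iff.mpr hbridge⟩
  have := hconn.nonempty
  obtain ⟨u, hu⟩ := SimpleGraph.exists_existsUnique_adj_of_forall_isBridge hall
  have hreg : K₀.IsRegularOfDegree 1 := fun v ↦ by
    obtain ⟨ψ, rfl⟩ := htrans u v
    rw [ψ.degree_eq, SimpleGraph.degree_eq_one_iff_existsUnique_adj]
    exact hu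
  have := hconn.card_le_two_of_isRegularOfDegree_one hreg
  omega
end

section
/- The edge-connectivity of a finite connected vertex-transitive graph equals its common vertex degree. -/
/-!
Mader's atom argument. For a vertex set `A` let `cutSize A` be the number of edges leaving `A`;
it is submodular and invariant under complementation and automorphisms. Choose an atom `A`: a
proper nonempty set of minimum cut size `λ`, of minimum cardinality among such sets, so that
`2 |A| ≤ |V|`. Submodularity forces every automorphic image of `A` that meets `A` to be `A`, so by
vertex-transitivity all vertices of `A` have the same number `c` of neighbours outside `A`, and
`λ = |A| c`, with `c ≥ 1` by connectivity. A vertex has fewer than `|A|` neighbours inside `A`,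
so `d < |A| + c`, whence `d ≤ |A| c = λ`.
-/

open Finset

namespace SimpleGraph

variable {V : Type*}

def IsVertexTransitive (G : SimpleGraph V) : Prop :=
  ∀ u v : V, ∃ ψ : G ≃g G, ψ u = v

lemma Reachable.exists_boundary_adj {H : SimpleGraph V} {u w : V} (h : H.Reachable u w)
    {A : Set V} (hu : u ∈ A) (hw : w ∉ A) : ∃ x y, H.Adj x y ∧ x ∈ A ∧ y ∉ A := by
  obtain ⟨p⟩ := h
  obtain ⟨d, -, hd⟩ := p.exists_boundary_dart A hu hw
  exact ⟨d.fst, d.snd, d.adj, hd⟩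

lemma not_reachable_deleteEdges_incidenceSet (G : SimpleGraph V) {u v : V} (huv : u ≠ v) :
    ¬(G.deleteEdges (G.incidenceSet u)).Reachable u v := by
  intro h
  obtain ⟨x, y, hxy, rfl, -⟩ := h.exists_boundary_adj (A := {u}) rfl huv.symm
  rw [deleteEdges_adj, mk'_mem_incidenceSet_left_iff] at hxy
  exact hxy.2 hxy.1

lemma IsEdgeConnected.le_ncard_of_not_connected [Finite V] [Nonempty V] {G : SimpleGraph V}
    {k : ℕ} (hG : G.IsEdgeConnected k) {S : Set (Sym2 V)} (hS : ¬(G.deleteEdges S).Connected) :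
    k ≤ S.ncard := by
  by_contra! hlt
  refine hS ⟨fun u v => hG u v ?_⟩
  rw [← S.toFinite.cast_ncard_eq]
  exact_mod_cast hlt

variable [Fintype V] [DecidableEq V] (G : SimpleGraph V) [DecidableRel G.Adj]

lemma ncard_incidenceSet (v : V) : (G.incidenceSet v).ncard = G.degree v := by
  rw [← coe_incidenceFinset, Set.ncard_coe_finset, card_incidenceFinset_eq_degree]

def cutSize (A : Finset V) : ℕ := #(G.interedges A Aᶜ)

lemma cutSize_eq_card_filter (A : Finset V) :
    G.cutSize A = #{p : V × V | G.Adj p.1 p.2 ∧ p.1 ∈ A ∧ p.2 ∉ A} := by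
  rw [cutSize, interedges_def]
  congr 1
  ext p
  simp only [mem_filter, mem_product, mem_compl, mem_univ, true_and]
  tauto

lemma cutSize_eq_sum (A : Finset V) : G.cutSize A = ∑ v ∈ A, #(G.neighborFinset v \ A) := by
  rw [cutSize, interedges_def, card_filter, sum_product]
  refine sum_congr rfl fun v _ => ?_
  rw [← card_filter]
  congr 1
  ext w
  simp [and_comm]

lemma cutSize_compl (A : Finset V) : G.cutSize Aᶜ = G.cutSize A := by
  rw [cutSize, compl_compl, cutSize]
  have := G.symm
  exact Rel.card_interedges_comm (r := G.Adj) _ _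

lemma cutSize_inter_add_cutSize_union_le (A B : Finset V) :
    G.cutSize (A ∩ B) + G.cutSize (A ∪ B) ≤ G.cutSize A + G.cutSize B := by
  simp only [cutSize_eq_card_filter, card_filter, ← sum_add_distrib]
  refine sum_le_sum fun p _ => ?_
  by_cases h : G.Adj p.1 p.2 <;> by_cases h1 : p.1 ∈ A <;> by_cases h2 : p.1 ∈ B <;>
    by_cases h3 : p.2 ∈ A <;> by_cases h4 : p.2 ∈ B <;> simp [*]

lemma cutSize_image (ψ : G ≃g G) (A : Finset V) : G.cutSize (A.image ψ) = G.cutSize A := by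
  rw [cutSize_eq_card_filter, cutSize_eq_card_filter]
  refine (card_equiv (ψ.toEquiv.prodCongr ψ.toEquiv) fun p => ?_).symm
  simp [ψ.map_adj_iff]

lemma card_neighborFinset_sdiff_image (ψ : G ≃g G) (A : Finset V) (v : V) :
    #(G.neighborFinset (ψ v) \ A.image ψ) = #(G.neighborFinset v \ A) := by
  refine (card_equiv ψ.toEquiv fun w => ?_).symm
  simp [ψ.injective.mem_finset_image, ψ.map_adj_iff]

variable {G}

lemma Connected.cutSize_pos (hG : G.Connected) {A : Finset V} (hA : A.Nonempty)
    (hAc : Aᶜ.Nonempty) : 0 < G.cutSize A := by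
  obtain ⟨a, ha⟩ := hA
  obtain ⟨b, hb⟩ := hAc
  obtain ⟨x, y, hxy, hx, hy⟩ := (hG a b).exists_boundary_adj (A := A) ha (mem_compl.mp hb)
  exact card_pos.mpr ⟨(x, y), by simpa [mem_interedges_iff, hxy] using ⟨hx, hy⟩⟩

lemma exists_cutSize_le_ncard {S : Set (Sym2 V)} {u v : V}
    (h : ¬(G.deleteEdges S).Reachable u v) :
    ∃ A : Finset V, u ∈ A ∧ v ∉ A ∧ G.cutSize A ≤ S.ncard := by
  classical
  set A : Finset V := {x | (G.deleteEdges S).Reachable u x}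
  refine ⟨A, by simp [A], by simpa [A], ?_⟩
  rw [cutSize, ← Set.ncard_coe_finset]
  refine Set.ncard_le_ncard_of_injOn (fun p => s(p.1, p.2)) (fun p hp => ?_)
    (fun p hp q hq hpq => ?_)
  · rw [mem_coe, mem_interedges_iff, mem_compl] at hp
    by_contra hS
    have hx : (G.deleteEdges S).Reachable u p.1 := by simpa [A] using hp.1
    exact hp.2.1 (by simpa [A] using hx.trans (deleteEdges_adj.mpr ⟨hp.2.2, hS⟩).reachable)
  · rw [mem_coe, mem_interedges_iff, mem_compl] at hp hq
    rcases Sym2.mk_eq_mk_iff.mp hpq with h | rfl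
    · exact h
    · exact (hq.2.1 hp.1).elim

variable (G) in
structure IsEdgeAtom (A : Finset V) : Prop where
  nonempty : A.Nonempty
  compl_nonempty : Aᶜ.Nonempty
  cutSize_le : ∀ B : Finset V, B.Nonempty → Bᶜ.Nonempty → G.cutSize A ≤ G.cutSize B
  card_le : ∀ B : Finset V, B.Nonempty → Bᶜ.Nonempty → G.cutSize B = G.cutSize A → #A ≤ #B

variable (G) in
lemma exists_isEdgeAtom {A : Finset V} (hA : A.Nonempty) (hAc : Aᶜ.Nonempty) :
    ∃ A₀, G.IsEdgeAtom A₀ := by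
  set proper : Finset (Finset V) := {B | B.Nonempty ∧ Bᶜ.Nonempty}
  obtain ⟨B₁, hB₁, hmin⟩ := exists_min_image proper G.cutSize ⟨A, by simp [proper, hA, hAc]⟩
  obtain ⟨A₀, hA₀, hsmall⟩ := exists_min_image {B ∈ proper | G.cutSize B = G.cutSize B₁} card
    ⟨B₁, by simp [hB₁]⟩
  simp only [proper, mem_filter, mem_univ, true_and] at hA₀ hmin hsmall
  exact ⟨A₀, hA₀.1.1, hA₀.1.2, fun B hB hBc => hA₀.2 ▸ hmin B ⟨hB, hBc⟩,
    fun B hB hBc (hcut : G.cutSize B = G.cutSize A₀) => hsmall B ⟨⟨hB, hBc⟩, hcut.trans hA₀.2⟩⟩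

namespace IsEdgeAtom

variable {A : Finset V}

lemma two_mul_card_le (hA : G.IsEdgeAtom A) : 2 * #A ≤ Fintype.card V := by
  have := hA.card_le Aᶜ hA.compl_nonempty (by simpa using hA.nonempty) (G.cutSize_compl A)
  rw [card_compl] at this
  omega

lemma subset_of_cutSize_le (hA : G.IsEdgeAtom A) {B : Finset V}
    (hB : G.cutSize B ≤ G.cutSize A) (hinter : (A ∩ B).Nonempty) (hunion : (A ∪ B)ᶜ.Nonempty) :
    A ⊆ B := by
  have hsub := G.cutSize_inter_add_cutSize_union_le A B
  have hinter_compl : (A ∩ B)ᶜ.Nonempty :=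
    hA.compl_nonempty.mono (compl_subset_compl.mpr inter_subset_left)
  have hI := hA.cutSize_le _ hinter hinter_compl
  have hU := hA.cutSize_le _ (hA.nonempty.mono subset_union_left) hunion
  have hcard := hA.card_le _ hinter hinter_compl (by omega)
  rw [← eq_of_subset_of_card_le inter_subset_left hcard]
  exact inter_subset_right

lemma image_eq (hA : G.IsEdgeAtom A) (ψ : G ≃g G) (h : (A ∩ A.image ψ).Nonempty) :
    A.image ψ = A := by
  have hcard : #(A.image ψ) = #A := card_image_of_injective _ ψ.injective
  have hunion : (A ∪ A.image ψ)ᶜ.Nonempty := by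
    rw [← card_pos, card_compl]
    have := card_union_add_card_inter A (A.image ψ)
    have := card_pos.mpr h
    have := hA.two_mul_card_le
    omega
  exact (eq_of_subset_of_card_le
    (hA.subset_of_cutSize_le (G.cutSize_image ψ A).le h hunion) hcard.le).symm

lemma card_neighborFinset_sdiff_eq (hA : G.IsEdgeAtom A) (htrans : G.IsVertexTransitive)
    {u v : V} (hu : u ∈ A) (hv : v ∈ A) :
    #(G.neighborFinset v \ A) = #(G.neighborFinset u \ A) := by
  obtain ⟨ψ, rfl⟩ := htrans u v
  have h := G.card_neighborFinset_sdiff_image ψ A u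
  rwa [hA.image_eq ψ ⟨ψ u, mem_inter.mpr ⟨hv, mem_image_of_mem ψ hu⟩⟩] at h

lemma le_cutSize (hA : G.IsEdgeAtom A) (hconn : G.Connected) (htrans : G.IsVertexTransitive)
    {d : ℕ} (hd : ∀ v, G.degree v = d) : d ≤ G.cutSize A := by
  obtain ⟨u, hu⟩ := hA.nonempty
  set c := #(G.neighborFinset u \ A)
  have hcut : G.cutSize A = #A * c := by
    rw [cutSize_eq_sum, sum_congr rfl fun v hv => hA.card_neighborFinset_sdiff_eq htrans hu hv,
      sum_const, smul_eq_mul]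
  have hdeg : #(G.neighborFinset u ∩ A) + c = d := by
    rw [card_inter_add_card_sdiff, card_neighborFinset_eq_degree, hd]
  have hinside : #(G.neighborFinset u ∩ A) < #A :=
    card_lt_card ⟨inter_subset_right,
      fun h => G.notMem_neighborFinset_self u (inter_subset_left (h hu))⟩
  have hpos := hconn.cutSize_pos hA.nonempty hA.compl_nonempty
  rw [hcut] at hpos ⊢
  have hc : 0 < c := Nat.pos_of_mul_pos_left hpos
  nlinarith

end IsEdgeAtom

theorem IsVertexTransitive.isEdgeConnected (htrans : G.IsVertexTransitive) (hconn : G.Connected)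
    {d : ℕ} (hd : ∀ v, G.degree v = d) : G.IsEdgeConnected d := by
  intro u v S hS
  by_contra h
  obtain ⟨A, hu, hv, hle⟩ := exists_cutSize_le_ncard h
  obtain ⟨A₀, hA₀⟩ := G.exists_isEdgeAtom ⟨u, hu⟩ ⟨v, mem_compl.mpr hv⟩
  have := (hA₀.le_cutSize hconn htrans hd).trans
    ((hA₀.cutSize_le A ⟨u, hu⟩ ⟨v, mem_compl.mpr hv⟩).trans hle)
  rw [← S.toFinite.cast_ncard_eq] at hS
  exact hS.not_ge (by exact_mod_cast this)

end SimpleGraph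

theorem stmt13 {V : Type*} [Fintype V] (G : SimpleGraph V) [DecidableRel G.Adj]
    (hconn : G.Connected)
    (htrans : ∀ u v : V, ∃ ψ : G ≃g G, ψ u = v)
    (d : ℕ) (hd : ∀ v : V, G.degree v = d) :
    sInf {n : ℕ | ∃ S : Set (Sym2 V), S ⊆ G.edgeSet ∧ S.ncard = n ∧
      ¬ (G.deleteEdges S).Connected} = d := by
  classical
  have : Nonempty V := hconn.nonempty
  obtain ⟨u⟩ := hconn.nonempty
  have hedge := SimpleGraph.IsVertexTransitive.isEdgeConnected htrans hconn hd
  rcases subsingleton_or_nontrivial V with hV | hV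
  · rw [← hd u, SimpleGraph.degree_eq_zero_of_subsingleton, Nat.sInf_eq_zero]
    exact Or.inr <| Set.eq_empty_of_forall_notMem fun n ⟨S, _, _, hS⟩ =>
      hS ⟨fun _ _ => .of_subsingleton⟩
  · obtain ⟨v, hv⟩ := exists_ne u
    refine IsLeast.csInf_eq ⟨⟨G.incidenceSet u, G.incidenceSet_subset u, ?_, ?_⟩, ?_⟩
    · rw [G.ncard_incidenceSet, hd]
    · exact fun h => G.not_reachable_deleteEdges_incidenceSet hv.symm (h.preconnected u v)
    · rintro n ⟨S, -, rfl, hS⟩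
      exact hedge.le_ncard_of_not_connected hS
end

section
/- Let a group G act on a set U and let 𝓕 be a G-invariant family of finite subsets of U with |F| ≤ m for all F ∈ 𝓕. Suppose X ⊆ U is a finite system of k-multiple representatives for 𝓕 (|X ∩ F| ≥ k for all F ∈ 𝓕). Then for every F ∈ 𝓕 there exists f ∈ F whose orbit G∘f is finite and satisfies m·|G∘f ∩ X| ≥ k·|G∘f|. -/
open Pointwise

open MulAction

/-!
The points of `F` with finite orbit are fixed by a finite-index subgroup `H`. By B. H. Neumann's
lemma (a group is not a finite union of cosets of infinite-index subgroups) some `g` moves every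
translate `q • f`, `q ∈ G ⧸ H`, of every infinite-orbit point `f ∈ F` off `X`. Averaging
`k ≤ |X ∩ (g q) • F|` over `q ∈ G ⧸ H` yields `f ∈ F` with `(g q) • f ∈ X` for at least a
`k / |F|` fraction of the cosets `q`; such an `f` has finite orbit, on which the points `q • f`
are equidistributed, so `X` meets at least a `k / |F|` fraction of that orbit.
-/

namespace MulAction

open scoped Finset

variable {G U : Type*} [Group G] [MulAction G U]

theorem finiteIndex_stabilizer_iff {u : U} :
    (stabilizer G u).FiniteIndex ↔ (orbit G u).Finite := by
  rw [Subgroup.finiteIndex_iff, index_stabilizer]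
  exact ⟨Set.finite_of_ncard_ne_zero, fun h => ((Set.ncard_pos h).2 (nonempty_orbit u)).ne'⟩

theorem exists_finiteIndex_le_stabilizer {S : Set U} (hS : S.Finite)
    (hSorb : ∀ s ∈ S, (orbit G s).Finite) :
    ∃ H : Subgroup G, H.FiniteIndex ∧ ∀ s ∈ S, H ≤ stabilizer G s := by
  have := hS.to_subtype
  exact ⟨⨅ s : S, stabilizer G (s : U),
    Subgroup.finiteIndex_iInf fun s => finiteIndex_stabilizer_iff.2 (hSorb s s.2),
    fun s hs => iInf_le (fun s : S => stabilizer G (s : U)) ⟨s, hs⟩⟩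

theorem exists_smul_notMem_of_orbit_infinite {T X : Set U} (hT : T.Finite)
    (hTorb : ∀ t ∈ T, (orbit G t).Infinite) (hX : X.Finite) :
    ∃ g : G, ∀ t ∈ T, g • t ∉ X := by
  classical
  by_contra! hcover
  -- `{a | a • t = x}` is empty or the left coset `c • stabilizer G t`.
  have hc (p : U × U) : ∃ c : G, p.2 ∈ orbit G p.1 → c • p.1 = p.2 := by
    by_cases h : p.2 ∈ orbit G p.1
    · obtain ⟨c, hc⟩ := h
      exact ⟨c, fun _ => hc⟩
    · exact ⟨1, fun h' => absurd h' h⟩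
  choose c hc using hc
  have hcovers : ⋃ p ∈ hT.toFinset ×ˢ hX.toFinset,
      c p • (stabilizer G p.1 : Set G) = Set.univ := by
    refine Set.eq_univ_of_forall fun a => ?_
    obtain ⟨t, ht, hat⟩ := hcover a
    have hct : c (t, a • t) • t = a • t := hc (t, a • t) (mem_orbit t a)
    refine Set.mem_biUnion (x := (t, a • t)) (by simp [ht, hat]) ?_
    rw [mem_leftCoset_iff, SetLike.mem_coe, mem_stabilizer_iff, mul_smul, inv_smul_eq_iff]
    exact hct.symm
  obtain ⟨p, hp, hfin⟩ := Subgroup.exists_finiteIndex_of_leftCoset_cover hcovers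
  exact hTorb p.1 (hT.mem_toFinset.1 (Finset.mem_product.1 hp).1)
    (finiteIndex_stabilizer_iff.1 hfin)

theorem card_out_smul_mem_mul_ncard_orbit {H : Subgroup G} {y : U}
    (hHy : H ≤ stabilizer G y) (Y : Set U) :
    Nat.card {q : G ⧸ H // q.out • y ∈ Y} * (orbit G y).ncard
      = H.index * (orbit G y ∩ Y).ncard := by
  set φ := ofQuotientStabilizer G y
  have hfst (q : G ⧸ H) : q.out • y = φ (Subgroup.quotientEquivProdOfLE hHy q).1 := by
    conv_rhs => rw [← q.out_eq']
    rfl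
  have hpre : φ ⁻¹' Y = φ ⁻¹' (orbit G y ∩ Y) := by
    ext a
    simp [φ, ofQuotientStabilizer_mem_orbit]
  have hcard : Nat.card {q : G ⧸ H // q.out • y ∈ Y}
      = (orbit G y ∩ Y).ncard * H.relIndex (stabilizer G y) := by
    rw [Nat.card_congr ((Subgroup.quotientEquivProdOfLE hHy).subtypeEquiv
        (q := fun p => φ p.1 ∈ Y) fun q => by rw [hfst]),
      Nat.card_congr (Equiv.prodSubtypeFstEquivSubtypeProd (p := fun a => φ a ∈ Y)),
      Nat.card_prod, Subgroup.relIndex, Subgroup.index_eq_card]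
    congr 1
    change Nat.card ↥(φ ⁻¹' Y) = _
    rw [Nat.card_coe_set_eq, hpre]
    refine Set.ncard_preimage_of_injective_subset_range (injective_ofQuotientStabilizer G y) ?_
    rintro _ ⟨⟨g, rfl⟩, -⟩
    exact ⟨g, rfl⟩
  rw [hcard, ← Subgroup.relIndex_mul_index hHy, index_stabilizer]
  ring

theorem ncard_inter_smul_set (a : G) (X F : Set U) :
    (X ∩ a • F).ncard = {f ∈ F | a • f ∈ X}.ncard := by
  rw [← Set.ncard_smul_set a⁻¹, Set.smul_set_inter, inv_smul_smul]
  congr 1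
  ext f
  simp [Set.mem_inv_smul_set_iff, and_comm]

theorem card_filter_mul_out_smul_mem_mul_ncard_orbit {H : Subgroup G} [Fintype (G ⧸ H)]
    {y : U} (hHy : H ≤ stabilizer G y) (g : G) (X : Set U) [DecidablePred (· ∈ X)] :
    #{q : G ⧸ H | (g * q.out) • y ∈ X} * (orbit G y).ncard
      = H.index * (orbit G y ∩ X).ncard := by
  have horbit : (orbit G y ∩ g⁻¹ • X).ncard = (orbit G y ∩ X).ncard := by
    rw [← Set.ncard_smul_set g⁻¹ (orbit G y ∩ X), Set.smul_set_inter, smul_orbit]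
  classical
  rw [← horbit, ← card_out_smul_mem_mul_ncard_orbit hHy, Nat.card_eq_fintype_card,
    Fintype.card_subtype]
  simp [Set.mem_inv_smul_set_iff, mul_smul]

theorem card_mul_le_sum_card_filter_smul_mem {ι : Type*} [Fintype ι] (a : ι → G)
    {F X : Set U} (hF : F.Finite) [DecidablePred (· ∈ X)] {k : ℕ}
    (hrep : ∀ i, k ≤ (X ∩ a i • F).ncard) :
    Fintype.card ι * k ≤ ∑ f ∈ hF.toFinset, #{i | a i • f ∈ X} := calc
  Fintype.card ι * k = ∑ _i : ι, k := by simp [mul_comm]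
  _ ≤ ∑ i : ι, #{f ∈ hF.toFinset | a i • f ∈ X} :=
    Finset.sum_le_sum fun i _ => (hrep i).trans_eq <| by
      rw [ncard_inter_smul_set, ← Set.ncard_coe_finset]
      simp
  _ = ∑ f ∈ hF.toFinset, #{i | a i • f ∈ X} :=
    Finset.sum_card_bipartiteAbove_eq_sum_card_bipartiteBelow _

theorem exists_mem_orbit_finite_mul_ncard_le {F X : Set U} (hF : F.Finite) (hX : X.Finite)
    {k : ℕ} (hk : 0 < k) (hrep : ∀ a : G, k ≤ (X ∩ a • F).ncard) :
    ∃ f ∈ F, (orbit G f).Finite ∧ k * (orbit G f).ncard ≤ F.ncard * (orbit G f ∩ X).ncard := by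
  classical
  obtain ⟨H, hH, hHF⟩ := exists_finiteIndex_le_stabilizer
    (hF.subset (Set.sep_subset F fun f => (orbit G f).Finite)) fun f hf => hf.2
  have : Fintype (G ⧸ H) := Fintype.ofFinite _
  have hN : 0 < H.index := Nat.pos_of_ne_zero hH.index_ne_zero
  obtain ⟨g, hg⟩ := exists_smul_notMem_of_orbit_infinite
    (T := ⋃ q : G ⧸ H, q.out • {f ∈ F | (orbit G f).Infinite})
    (Set.finite_iUnion fun q => (hF.subset (Set.sep_subset _ _)).smul_set)
    (by
      simp only [Set.mem_iUnion, Set.mem_smul_set]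
      rintro _ ⟨q, f, hf, rfl⟩
      rw [orbit_smul]
      exact hf.2)
    hX
  set A : U → ℕ := fun f => #{q : G ⧸ H | (g * q.out) • f ∈ X}
  have hsum : H.index * k ≤ ∑ f ∈ hF.toFinset, A f := by
    rw [Subgroup.index_eq_card, Nat.card_eq_fintype_card]
    exact card_mul_le_sum_card_filter_smul_mem (fun q : G ⧸ H => g * q.out) hF fun _ => hrep _
  obtain ⟨f, hfF, hf⟩ : ∃ f ∈ hF.toFinset, H.index * k ≤ F.ncard * A f := by
    refine Finset.exists_le_of_sum_le
      (Finset.nonempty_of_sum_ne_zero (f := A) (by have := Nat.mul_pos hN hk; omega)) ?_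
    rw [Finset.sum_const, ← Finset.mul_sum, smul_eq_mul, ← Set.ncard_eq_toFinset_card F hF]
    exact Nat.mul_le_mul_left _ hsum
  rw [Set.Finite.mem_toFinset] at hfF
  obtain ⟨q, hq⟩ : ∃ q : G ⧸ H, (g * q.out) • f ∈ X := by
    have hA : 0 < A f := Nat.pos_of_ne_zero fun h => by
      simp only [h, mul_zero, nonpos_iff_eq_zero, mul_eq_zero] at hf
      omega
    obtain ⟨q, hq⟩ := Finset.card_pos.1 hA
    exact ⟨q, by simpa using hq⟩
  have hforb : (orbit G f).Finite := by
    by_contra hinf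
    exact hg _ (Set.mem_iUnion.2 ⟨q, Set.smul_mem_smul_set ⟨hfF, hinf⟩⟩) (by rwa [← mul_smul])
  have hcount : A f * (orbit G f).ncard = H.index * (orbit G f ∩ X).ncard :=
    card_filter_mul_out_smul_mem_mul_ncard_orbit (hHF f ⟨hfF, hforb⟩) g X
  refine ⟨f, hfF, hforb, Nat.le_of_mul_le_mul_left ?_ hN⟩
  calc H.index * (k * (orbit G f).ncard) = H.index * k * (orbit G f).ncard := by ring
    _ ≤ F.ncard * A f * (orbit G f).ncard := Nat.mul_le_mul_right _ hf
    _ = H.index * (F.ncard * (orbit G f ∩ X).ncard) := by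
      rw [mul_assoc, hcount]
      ring

end MulAction

theorem stmt15_general {G U : Type*} [Group G] [MulAction G U]
    (𝓕 : Set (Set U)) (k m : ℕ) (hk : 0 < k)
    (hfin : ∀ F ∈ 𝓕, F.Finite ∧ F.ncard ≤ m)
    (hinv : ∀ (g : G), ∀ F ∈ 𝓕, g • F ∈ 𝓕)
    (X : Set U) (hX : X.Finite)
    (hrep : ∀ F ∈ 𝓕, k ≤ (X ∩ F).ncard) :
    ∀ F ∈ 𝓕, ∃ f ∈ F, (orbit G f).Finite ∧
      k * (orbit G f).ncard ≤ m * ((orbit G f) ∩ X).ncard := by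
  intro F hF
  obtain ⟨hFfin, hFcard⟩ := hfin F hF
  obtain ⟨f, hfF, hforb, hdens⟩ :=
    exists_mem_orbit_finite_mul_ncard_le hFfin hX hk fun g => hrep _ (hinv g F hF)
  exact ⟨f, hfF, hforb, hdens.trans (Nat.mul_le_mul_right _ hFcard)⟩

theorem stmt15 {G U : Type*} [Group G] [MulAction G U]
    (𝓕 : Set (Set U)) (k m : ℕ) (hk : 0 < k) (hm : 0 < m)
    (hfin : ∀ F ∈ 𝓕, F.Finite ∧ F.ncard ≤ m)
    (hinv : ∀ (g : G), ∀ F ∈ 𝓕, g • F ∈ 𝓕)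
    (X : Set U) (hX : X.Finite)
    (hrep : ∀ F ∈ 𝓕, k ≤ (X ∩ F).ncard) :
    ∀ F ∈ 𝓕, ∃ f ∈ F, (orbit G f).Finite ∧
      k * (orbit G f).ncard ≤ m * ((orbit G f) ∩ X).ncard :=
  stmt15_general 𝓕 k m hk hfin hinv X hX hrep
end
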